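/- arXiv:2010.15505 — 2 statements merged into one kernel-verified Lean document; each statement's English description precedes it below -/
import Mathlib

section
/- For all real characteristics a, b, c, d, e, f, g, h and all complex numbers x₁, y₁, x₂, y₂, the generalized Göpel duplication formula holds: θ[a,c;b,d](x₁,y₁) · θ[e,g;f,h](x₂,y₂) = Σ_{(ε,δ)∈{0,1}²} Θ[(a+e)/2+ε, (c+g)/2+δ; b+f, d+h](x₁+x₂, y₁+y₂) · Θ[(a−e)/2+ε, (c−g)/2+δ; b−f, d−h](x₁−x₂, y₁−y₂). -/
/-!
For pairs `(p, q)` of lattice points in `ℤ²`, let `ε ∈ {0,1}²` be the parity class of `p - q`; then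
`(ε, k, l) ↦ (k + l + ε, k - l)` is a bijection `{0,1}² × ℤ² × ℤ² → ℤ² × ℤ²`. Under it,
`τ (u + v)² + τ (u - v)² = 2τ u² + 2τ v²` turns each product of summands of the two theta series
into a product of summands of the two series with doubled moduli, so the double series splits into
four products. The rearrangement is justified by absolute convergence, obtained by comparison with a
product of one-variable Gaussian sums, since a positive definite binary form dominates
`det / trace` times the squared norm.
-/

open Complex

/-- Genus-two theta function with real characteristics `a c b d`
(upper characteristics `a, c`, lower characteristics `b, d`),
moduli `τ₁ τ₂ τ₁₂` and complex arguments `x y`. -/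
noncomputable def theta (τ₁ τ₂ τ₁₂ : ℂ) (a c b d : ℝ) (x y : ℂ) : ℂ :=
  ∑' p : ℤ × ℤ,
    Complex.exp
      ((Real.pi : ℂ) * Complex.I *
          (τ₁ * ((p.1 : ℂ) + (a : ℂ) / 2) ^ 2 + τ₂ * ((p.2 : ℂ) + (c : ℂ) / 2) ^ 2 +
            2 * τ₁₂ * ((p.1 : ℂ) + (a : ℂ) / 2) * ((p.2 : ℂ) + (c : ℂ) / 2)) +
        2 * (Real.pi : ℂ) * Complex.I *
          (((p.1 : ℂ) + (a : ℂ) / 2) * (x + (b : ℂ) / 2) +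
            ((p.2 : ℂ) + (c : ℂ) / 2) * (y + (d : ℂ) / 2)))

/-- The same theta function with doubled moduli `2τ₁, 2τ₂, 2τ₁₂`. -/
noncomputable def Theta2 (τ₁ τ₂ τ₁₂ : ℂ) (a c b d : ℝ) (x y : ℂ) : ℂ :=
  theta (2 * τ₁) (2 * τ₂) (2 * τ₁₂) a c b d x y

open Real

noncomputable def thetaTerm (τ₁ τ₂ τ₁₂ : ℂ) (a c b d : ℝ) (x y : ℂ) (p : ℤ × ℤ) : ℂ :=
  Complex.exp
    ((Real.pi : ℂ) * Complex.I *
        (τ₁ * ((p.1 : ℂ) + (a : ℂ) / 2) ^ 2 + τ₂ * ((p.2 : ℂ) + (c : ℂ) / 2) ^ 2 +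
          2 * τ₁₂ * ((p.1 : ℂ) + (a : ℂ) / 2) * ((p.2 : ℂ) + (c : ℂ) / 2)) +
      2 * (Real.pi : ℂ) * Complex.I *
        (((p.1 : ℂ) + (a : ℂ) / 2) * (x + (b : ℂ) / 2) +
          ((p.2 : ℂ) + (c : ℂ) / 2) * (y + (d : ℂ) / 2)))

lemma theta_eq_tsum_thetaTerm (τ₁ τ₂ τ₁₂ : ℂ) (a c b d : ℝ) (x y : ℂ) :
    theta τ₁ τ₂ τ₁₂ a c b d x y = ∑' p, thetaTerm τ₁ τ₂ τ₁₂ a c b d x y p :=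
  rfl

lemma exists_pos_mul_sq_add_sq_le {t₁ t₂ t₁₂ : ℝ} (h₁ : 0 < t₁) (h : t₁₂ ^ 2 < t₁ * t₂) :
    ∃ κ > 0, ∀ u v : ℝ, κ * (u ^ 2 + v ^ 2) ≤ t₁ * u ^ 2 + t₂ * v ^ 2 + 2 * t₁₂ * u * v := by
  have h₂ : 0 < t₂ := pos_of_mul_pos_right ((sq_nonneg t₁₂).trans_lt h) h₁.le
  refine ⟨(t₁ * t₂ - t₁₂ ^ 2) / (t₁ + t₂), by apply div_pos <;> linarith, fun u v => ?_⟩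
  set κ := (t₁ * t₂ - t₁₂ ^ 2) / (t₁ + t₂) with hκ
  have hκ_lt : κ < t₁ := by rw [hκ, div_lt_iff₀ (by linarith)]; nlinarith
  have hdet : (t₁ - κ) * (t₂ - κ) = t₁₂ ^ 2 + κ ^ 2 := by
    rw [hκ]; field_simp; ring
  have hsq := sq_nonneg ((t₁ - κ) * u + t₁₂ * v)
  nlinarith [sq_nonneg (κ * v), mul_pos (sub_pos.2 hκ_lt) (sub_pos.2 hκ_lt)]

lemma summable_exp_neg_mul_int_add_sq_sub {r : ℝ} (hr : 0 < r) (s t : ℝ) :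
    Summable fun n : ℤ => Real.exp (-r * (n + s) ^ 2 - t * (n + s)) := by
  have hτ : 0 < (((r / π : ℝ) : ℂ) * Complex.I).im := by simp; positivity
  refine (((summable_jacobiTheta₂_term_iff (((2 * r * s + t) / (2 * π) : ℝ) * Complex.I) _).mpr
    hτ).norm.mul_left (Real.exp (-r * s ^ 2 - t * s))).congr fun n => ?_
  rw [norm_jacobiTheta₂_term, ← Real.exp_add]
  congr 1
  simp only [Complex.mul_im, Complex.ofReal_re, Complex.ofReal_im, Complex.I_re, Complex.I_im]
  field_simp
  ring

lemma norm_thetaTerm (τ₁ τ₂ τ₁₂ : ℂ) (a c b d : ℝ) (x y : ℂ) (p : ℤ × ℤ) :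
    ‖thetaTerm τ₁ τ₂ τ₁₂ a c b d x y p‖ =
      Real.exp (-π * (τ₁.im * (p.1 + a / 2) ^ 2 + τ₂.im * (p.2 + c / 2) ^ 2 +
          2 * τ₁₂.im * (p.1 + a / 2) * (p.2 + c / 2)) -
        2 * π * ((p.1 + a / 2) * x.im + (p.2 + c / 2) * y.im)) := by
  rw [thetaTerm, Complex.norm_exp]
  congr 1
  have h1 : ((p.1 : ℂ) + (a : ℂ) / 2) = (((p.1 : ℝ) + a / 2 : ℝ) : ℂ) := by push_cast; ring
  have h2 : ((p.2 : ℂ) + (c : ℂ) / 2) = (((p.2 : ℝ) + c / 2 : ℝ) : ℂ) := by push_cast; ring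
  rw [h1, h2]
  simp [sq]
  ring

lemma summable_norm_thetaTerm {τ₁ τ₂ τ₁₂ : ℂ} (hτ₁ : 0 < τ₁.im)
    (hτ : τ₁₂.im ^ 2 < τ₁.im * τ₂.im) (a c b d : ℝ) (x y : ℂ) :
    Summable fun p => ‖thetaTerm τ₁ τ₂ τ₁₂ a c b d x y p‖ := by
  obtain ⟨κ, hκ, hQ⟩ := exists_pos_mul_sq_add_sq_le hτ₁ hτ
  have hπκ : 0 < π * κ := mul_pos Real.pi_pos hκ
  refine Summable.of_nonneg_of_le (fun _ => norm_nonneg _) (fun p => ?_)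
    ((summable_exp_neg_mul_int_add_sq_sub hπκ (a / 2) (2 * π * x.im)).mul_of_nonneg
      (summable_exp_neg_mul_int_add_sq_sub hπκ (c / 2) (2 * π * y.im))
      (fun _ => (Real.exp_pos _).le) (fun _ => (Real.exp_pos _).le))
  rw [norm_thetaTerm, ← Real.exp_add, Real.exp_le_exp]
  nlinarith [hQ (p.1 + a / 2) (p.2 + c / 2), Real.pi_pos]

lemma summable_norm_thetaTerm_two_mul {τ₁ τ₂ τ₁₂ : ℂ} (hτ₁ : 0 < τ₁.im)
    (hτ : τ₁₂.im ^ 2 < τ₁.im * τ₂.im) (a c b d : ℝ) (x y : ℂ) :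
    Summable fun p => ‖thetaTerm (2 * τ₁) (2 * τ₂) (2 * τ₁₂) a c b d x y p‖ := by
  refine summable_norm_thetaTerm ?_ ?_ a c b d x y <;> simp <;> nlinarith

def duplicationMap (w : (Fin 2 × Fin 2) × (ℤ × ℤ) × (ℤ × ℤ)) : (ℤ × ℤ) × (ℤ × ℤ) :=
  ((w.2.1.1 + w.2.2.1 + w.1.1, w.2.1.2 + w.2.2.2 + w.1.2),
    (w.2.1.1 - w.2.2.1, w.2.1.2 - w.2.2.2))

lemma duplicationMap_bijective : Function.Bijective duplicationMap := by
  refine ⟨?_, fun ⟨⟨m₁, m₂⟩, ⟨n₁, n₂⟩⟩ => ?_⟩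
  · rintro ⟨⟨ε, δ⟩, ⟨k₁, k₂⟩, ⟨l₁, l₂⟩⟩ ⟨⟨ε', δ'⟩, ⟨k₁', k₂'⟩, ⟨l₁', l₂'⟩⟩ hw
    simp only [duplicationMap, Prod.mk.injEq] at hw ⊢
    omega
  · refine ⟨⟨⟨⟨((m₁ - n₁) % 2).toNat, by omega⟩, ⟨((m₂ - n₂) % 2).toNat, by omega⟩⟩,
      ⟨(m₁ + n₁ - (m₁ - n₁) % 2) / 2, (m₂ + n₂ - (m₂ - n₂) % 2) / 2⟩,
      ⟨(m₁ - n₁ - (m₁ - n₁) % 2) / 2, (m₂ - n₂ - (m₂ - n₂) % 2) / 2⟩⟩, ?_⟩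
    simp only [duplicationMap, Prod.mk.injEq]
    omega

noncomputable def duplicationEquiv : (Fin 2 × Fin 2) × (ℤ × ℤ) × (ℤ × ℤ) ≃ (ℤ × ℤ) × (ℤ × ℤ) :=
  Equiv.ofBijective duplicationMap duplicationMap_bijective

lemma thetaTerm_mul_thetaTerm (τ₁ τ₂ τ₁₂ : ℂ) (a c b d e g f h : ℝ) (x₁ y₁ x₂ y₂ : ℂ)
    (ε δ : ℕ) (k l : ℤ × ℤ) :
    thetaTerm τ₁ τ₂ τ₁₂ a c b d x₁ y₁ (k.1 + l.1 + ε, k.2 + l.2 + δ) *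
        thetaTerm τ₁ τ₂ τ₁₂ e g f h x₂ y₂ (k.1 - l.1, k.2 - l.2) =
      thetaTerm (2 * τ₁) (2 * τ₂) (2 * τ₁₂) ((a + e) / 2 + ε) ((c + g) / 2 + δ)
          (b + f) (d + h) (x₁ + x₂) (y₁ + y₂) k *
        thetaTerm (2 * τ₁) (2 * τ₂) (2 * τ₁₂) ((a - e) / 2 + ε) ((c - g) / 2 + δ)
          (b - f) (d - h) (x₁ - x₂) (y₁ - y₂) l := by
  simp only [thetaTerm, ← Complex.exp_add]
  congr 1
  push_cast
  ring

lemma tsum_thetaTerm_mul_thetaTerm_duplication {τ₁ τ₂ τ₁₂ : ℂ} (hτ₁ : 0 < τ₁.im)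
    (hτ : τ₁₂.im ^ 2 < τ₁.im * τ₂.im) (a c b d e g f h : ℝ) (x₁ y₁ x₂ y₂ : ℂ) (ε δ : ℕ) :
    ∑' kl : (ℤ × ℤ) × (ℤ × ℤ),
        thetaTerm τ₁ τ₂ τ₁₂ a c b d x₁ y₁ (kl.1.1 + kl.2.1 + ε, kl.1.2 + kl.2.2 + δ) *
          thetaTerm τ₁ τ₂ τ₁₂ e g f h x₂ y₂ (kl.1.1 - kl.2.1, kl.1.2 - kl.2.2) =
      Theta2 τ₁ τ₂ τ₁₂ ((a + e) / 2 + ε) ((c + g) / 2 + δ) (b + f) (d + h) (x₁ + x₂) (y₁ + y₂) *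
        Theta2 τ₁ τ₂ τ₁₂ ((a - e) / 2 + ε) ((c - g) / 2 + δ) (b - f) (d - h)
          (x₁ - x₂) (y₁ - y₂) := by
  simp only [thetaTerm_mul_thetaTerm, Theta2, theta_eq_tsum_thetaTerm]
  exact (tsum_mul_tsum_of_summable_norm (summable_norm_thetaTerm_two_mul hτ₁ hτ ..)
    (summable_norm_thetaTerm_two_mul hτ₁ hτ ..)).symm

theorem goepel_generalized_duplication_general (τ₁ τ₂ τ₁₂ : ℂ)
    (hτ₁ : 0 < τ₁.im) (hτ : τ₁₂.im ^ 2 < τ₁.im * τ₂.im)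
    (a b c d e f g h : ℝ) (x₁ y₁ x₂ y₂ : ℂ) :
    theta τ₁ τ₂ τ₁₂ a c b d x₁ y₁ * theta τ₁ τ₂ τ₁₂ e g f h x₂ y₂ =
      ∑ ε ∈ Finset.range 2, ∑ δ ∈ Finset.range 2,
        Theta2 τ₁ τ₂ τ₁₂ ((a + e) / 2 + ε) ((c + g) / 2 + δ) (b + f) (d + h)
            (x₁ + x₂) (y₁ + y₂) *
          Theta2 τ₁ τ₂ τ₁₂ ((a - e) / 2 + ε) ((c - g) / 2 + δ) (b - f) (d - h)
            (x₁ - x₂) (y₁ - y₂) := by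
  set F := thetaTerm τ₁ τ₂ τ₁₂ a c b d x₁ y₁
  set G := thetaTerm τ₁ τ₂ τ₁₂ e g f h x₂ y₂
  have hF := summable_norm_thetaTerm hτ₁ hτ a c b d x₁ y₁
  have hG := summable_norm_thetaTerm hτ₁ hτ e g f h x₂ y₂
  have hFG : Summable fun w => F (duplicationEquiv w).1 * G (duplicationEquiv w).2 :=
    duplicationEquiv.summable_iff.mpr (hF.mul_norm hG).of_norm
  rw [theta_eq_tsum_thetaTerm, theta_eq_tsum_thetaTerm, tsum_mul_tsum_of_summable_norm hF hG,
    ← duplicationEquiv.tsum_eq, hFG.tsum_prod, tsum_fintype, Fintype.sum_prod_type]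
  simp only [Finset.sum_range, duplicationEquiv, Equiv.ofBijective_apply, duplicationMap, F, G,
    tsum_thetaTerm_mul_thetaTerm_duplication hτ₁ hτ]

theorem goepel_generalized_duplication (τ₁ τ₂ τ₁₂ : ℂ)
    (hτ₁ : 0 < τ₁.im) (hτ₂ : 0 < τ₂.im) (hτ : τ₁₂.im ^ 2 < τ₁.im * τ₂.im)
    (a b c d e f g h : ℝ) (x₁ y₁ x₂ y₂ : ℂ) :
    theta τ₁ τ₂ τ₁₂ a c b d x₁ y₁ * theta τ₁ τ₂ τ₁₂ e g f h x₂ y₂ =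
      ∑ ε ∈ Finset.range 2, ∑ δ ∈ Finset.range 2,
        Theta2 τ₁ τ₂ τ₁₂ ((a + e) / 2 + ε) ((c + g) / 2 + δ) (b + f) (d + h)
            (x₁ + x₂) (y₁ + y₂) *
          Theta2 τ₁ τ₂ τ₁₂ ((a - e) / 2 + ε) ((c - g) / 2 + δ) (b - f) (d - h)
            (x₁ - x₂) (y₁ - y₂) :=
  goepel_generalized_duplication_general τ₁ τ₂ τ₁₂ hτ₁ hτ a b c d e f g h x₁ y₁ x₂ y₂
end

section
/- Functional relation (II): for all real characteristics a, c, b, d and all complex u, v, θ[a,c;b,d](u,v) · θ[a,c;0,0](u,v) = Σ_{(ε,δ)∈{0,1}²} Θ[a+ε, c+δ; b, d](2u, 2v) · Θ[ε, δ; b, d](0, 0). -/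
/-!
Multiply out the two series and index the double series by pairs `(p, q)` of lattice points;
each pair is uniquely `p = P + Q + η`, `q = P - Q` with `η ∈ {0, 1}²` the parity of `p + q`.
By the parallelogram law `S(X) + S(Y) = 2 S((X + Y) / 2) + 2 S((X - Y) / 2)` for the quadratic
form `S` of the moduli, the summand at `p` times the summand at `q` is the summand of the
doubled-moduli series with characteristic `(a, c) + η` at `P` times the one with characteristic
`η` at `Q`, so for fixed `η` the double series over `(P, Q)` factors again. Positive definiteness
of `Im τ` gives the absolute convergence behind every rearrangement.
-/

open Complex

open scoped Real

noncomputable def thetaSummand (τ₁ τ₂ τ₁₂ : ℂ) (X₁ X₂ : ℝ) (x y : ℂ) : ℂ :=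
  exp (π * I * (τ₁ * X₁ ^ 2 + τ₂ * X₂ ^ 2 + 2 * τ₁₂ * X₁ * X₂) + 2 * π * I * (X₁ * x + X₂ * y))

lemma theta_eq_tsum_thetaSummand (τ₁ τ₂ τ₁₂ : ℂ) (a c b d : ℝ) (x y : ℂ) :
    theta τ₁ τ₂ τ₁₂ a c b d x y =
      ∑' p : ℤ × ℤ, thetaSummand τ₁ τ₂ τ₁₂ (p.1 + a / 2) (p.2 + c / 2) (x + b / 2) (y + d / 2) := by
  simp only [theta, thetaSummand]
  push_cast
  rfl

lemma thetaSummand_mul_thetaSummand (τ₁ τ₂ τ₁₂ : ℂ) (X₁ X₂ Y₁ Y₂ : ℝ) (x y x' y' : ℂ) :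
    thetaSummand τ₁ τ₂ τ₁₂ X₁ X₂ x y * thetaSummand τ₁ τ₂ τ₁₂ Y₁ Y₂ x' y' =
      thetaSummand (2 * τ₁) (2 * τ₂) (2 * τ₁₂) ((X₁ + Y₁) / 2) ((X₂ + Y₂) / 2) (x + x')
          (y + y') *
        thetaSummand (2 * τ₁) (2 * τ₂) (2 * τ₁₂) ((X₁ - Y₁) / 2) ((X₂ - Y₂) / 2) (x - x')
          (y - y') := by
  simp only [thetaSummand, ← exp_add]
  push_cast
  ring_nf

lemma norm_thetaSummand (τ₁ τ₂ τ₁₂ : ℂ) (X₁ X₂ : ℝ) (x y : ℂ) :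
    ‖thetaSummand τ₁ τ₂ τ₁₂ X₁ X₂ x y‖ =
      Real.exp (-π * (τ₁.im * X₁ ^ 2 + τ₂.im * X₂ ^ 2 + 2 * τ₁₂.im * X₁ * X₂)
        - 2 * π * (X₁ * x.im + X₂ * y.im)) := by
  rw [thetaSummand, norm_exp]
  congr 1
  simp only [pow_two, add_re, mul_re, ofReal_re, I_re, mul_zero, ofReal_im, I_im, mul_one,
    sub_self, sub_zero, mul_im, zero_mul, add_zero, re_ofNat, im_ofNat, zero_add, add_im, zero_sub,
    neg_mul]
  ring

lemma exists_pos_mul_sq_add_sq_le_s2 {Y₁ Y₂ Y₁₂ : ℝ} (h₁ : 0 < Y₁) (h₂ : 0 < Y₂)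
    (h : Y₁₂ ^ 2 < Y₁ * Y₂) :
    ∃ ρ > 0, ∀ X₁ X₂ : ℝ,
      ρ * (X₁ ^ 2 + X₂ ^ 2) ≤ Y₁ * X₁ ^ 2 + Y₂ * X₂ ^ 2 + 2 * Y₁₂ * X₁ * X₂ := by
  refine ⟨(Y₁ * Y₂ - Y₁₂ ^ 2) / (Y₁ + Y₂), div_pos (by linarith) (by linarith), fun X₁ X₂ => ?_⟩
  rw [div_mul_eq_mul_div, div_le_iff₀ (by linarith)]
  have hA : 0 < Y₁ ^ 2 + Y₁₂ ^ 2 := by positivity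
  nlinarith [sq_nonneg ((Y₁ ^ 2 + Y₁₂ ^ 2) * X₁ + Y₁₂ * (Y₁ + Y₂) * X₂),
    sq_nonneg ((Y₁ * Y₂ - Y₁₂ ^ 2) * X₂)]

lemma summable_exp_gaussian_shift {ρ : ℝ} (hρ : 0 < ρ) (α s : ℝ) :
    Summable fun n : ℤ => Real.exp (-π * ρ * (n + α) ^ 2 - 2 * π * (n + α) * s) := by
  have hθ := ((summable_jacobiTheta₂_term_iff (I * (ρ * α + s)) (I * ρ)).2 (by simpa)).norm
  refine (hθ.mul_left (Real.exp (-π * ρ * α ^ 2 - 2 * π * α * s))).congr fun n => ?_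
  rw [norm_jacobiTheta₂_term, ← Real.exp_add]
  congr 1
  simp only [neg_mul, mul_im, I_re, ofReal_im, mul_zero, I_im, ofReal_re, one_mul, zero_add, add_im,
    zero_mul, add_zero, add_re, mul_re, sub_zero]
  ring

lemma summable_norm_thetaSummand {τ₁ τ₂ τ₁₂ : ℂ} (hτ₁ : 0 < τ₁.im) (hτ₂ : 0 < τ₂.im)
    (hτ : τ₁₂.im ^ 2 < τ₁.im * τ₂.im) (α β : ℝ) (x y : ℂ) :
    Summable fun p : ℤ × ℤ => ‖thetaSummand τ₁ τ₂ τ₁₂ (p.1 + α) (p.2 + β) x y‖ := by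
  obtain ⟨ρ, hρ, hQ⟩ := exists_pos_mul_sq_add_sq_le_s2 hτ₁ hτ₂ hτ
  refine Summable.of_nonneg_of_le (fun _ => norm_nonneg _) (fun p => ?_)
    ((summable_exp_gaussian_shift hρ α x.im).mul_of_nonneg
      (summable_exp_gaussian_shift hρ β y.im) (fun _ => (Real.exp_pos _).le)
      (fun _ => (Real.exp_pos _).le))
  rw [norm_thetaSummand, ← Real.exp_add, Real.exp_le_exp]
  nlinarith [hQ (p.1 + α) (p.2 + β), Real.pi_pos]

def parityEquiv : Fin 2 × ℤ × ℤ ≃ ℤ × ℤ where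
  toFun x := (x.2.1 + x.2.2 + (x.1 : ℕ), x.2.1 - x.2.2)
  invFun m := (⟨((m.1 + m.2) % 2).toNat, by omega⟩, (m.1 + m.2) / 2, (m.1 + m.2) / 2 - m.2)
  left_inv := by
    rintro ⟨⟨ε, hε⟩, M, M'⟩
    simp only [Prod.mk.injEq, Fin.mk.injEq]
    omega
  right_inv := by
    rintro ⟨m, m'⟩
    simp only [Prod.mk.injEq]
    omega

def parityEquiv₂ : (Fin 2 × Fin 2) × (ℤ × ℤ) × (ℤ × ℤ) ≃ (ℤ × ℤ) × (ℤ × ℤ) :=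
  (Equiv.prodCongr (Equiv.refl _) (Equiv.prodProdProdComm _ _ _ _)).trans <|
    (Equiv.prodProdProdComm _ _ _ _).trans <|
      (Equiv.prodCongr parityEquiv parityEquiv).trans (Equiv.prodProdProdComm _ _ _ _)

lemma tsum_mul_tsum_eq_sum_parity {R : Type*} [NormedRing R] [CompleteSpace R]
    {f g : ℤ × ℤ → R} (hf : Summable fun p => ‖f p‖) (hg : Summable fun q => ‖g q‖) :
    (∑' p, f p) * (∑' q, g q) = ∑ ε : Fin 2, ∑ δ : Fin 2, ∑' PQ : (ℤ × ℤ) × (ℤ × ℤ),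
      f (PQ.1.1 + PQ.2.1 + (ε : ℕ), PQ.1.2 + PQ.2.2 + (δ : ℕ)) *
        g (PQ.1.1 - PQ.2.1, PQ.1.2 - PQ.2.2) := by
  have hfg : Summable fun z : (ℤ × ℤ) × (ℤ × ℤ) => f z.1 * g z.2 := (hf.mul_norm hg).of_norm
  have hfg' := parityEquiv₂.summable_iff.2 hfg
  simp only [Function.comp_def] at hfg'
  rw [tsum_mul_tsum_of_summable_norm hf hg, ← parityEquiv₂.tsum_eq,
    hfg'.tsum_prod' hfg'.prod_factor, tsum_fintype, Fintype.sum_prod_type]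
  rfl

theorem functional_relation_II (τ₁ τ₂ τ₁₂ : ℂ)
    (hτ₁ : 0 < τ₁.im) (hτ₂ : 0 < τ₂.im) (hτ : τ₁₂.im ^ 2 < τ₁.im * τ₂.im)
    (a c b d : ℝ) (u v : ℂ) :
    theta τ₁ τ₂ τ₁₂ a c b d u v * theta τ₁ τ₂ τ₁₂ a c 0 0 u v =
      ∑ ε ∈ Finset.range 2, ∑ δ ∈ Finset.range 2,
        Theta2 τ₁ τ₂ τ₁₂ (a + ε) (c + δ) b d (2 * u) (2 * v) *
          Theta2 τ₁ τ₂ τ₁₂ ε δ b d 0 0 := by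
  have him (z : ℂ) : (2 * z).im = 2 * z.im := by simp
  have h2τ₁ : 0 < (2 * τ₁).im := by rw [him]; positivity
  have h2τ₂ : 0 < (2 * τ₂).im := by rw [him]; positivity
  have h2τ : (2 * τ₁₂).im ^ 2 < (2 * τ₁).im * (2 * τ₂).im := by rw [him, him, him]; nlinarith
  rw [theta_eq_tsum_thetaSummand, theta_eq_tsum_thetaSummand,
    tsum_mul_tsum_eq_sum_parity (summable_norm_thetaSummand hτ₁ hτ₂ hτ _ _ _ _)
      (summable_norm_thetaSummand hτ₁ hτ₂ hτ _ _ _ _), Finset.sum_range]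
  refine Fintype.sum_congr _ _ fun ε => ?_
  rw [Finset.sum_range]
  refine Fintype.sum_congr _ _ fun δ => ?_
  rw [Theta2, Theta2, theta_eq_tsum_thetaSummand, theta_eq_tsum_thetaSummand,
    tsum_mul_tsum_of_summable_norm (summable_norm_thetaSummand h2τ₁ h2τ₂ h2τ _ _ _ _)
      (summable_norm_thetaSummand h2τ₁ h2τ₂ h2τ _ _ _ _)]
  refine tsum_congr fun PQ => ?_
  rw [thetaSummand_mul_thetaSummand]
  congr 2 <;> push_cast <;> ring
end
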